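/- For each β < 1, the σ-finite measure F on ℝ with density |x|^{-β} with respect to Lebesgue measure is zero-stable: for any two linear functionals f₁(x₁,x₂) = a₁x₁ + a₂x₂ and f₂(x₁,x₂) = b₁x₁ + b₂x₂ with a₁a₂b₁b₂ ≠ 0 and |a₁a₂| = |b₁b₂|, there exists a transformation L: ℝ² → ℝ² preserving F × F such that f₂ = f₁ ∘ L. In particular the Lebesgue measure on ℝ (β = 0) is zero-stable. -/

import Mathlib

/-!
The density `|x|^{-β}` is homogeneous of degree `-β`, so the dilation `x ↦ c x` pushes `F` forward
to `|c|^{β-1} • F`. The diagonal map `(x₁, x₂) ↦ (b₁/a₁ · x₁, b₂/a₂ · x₂)` turns `f₁` into `f₂`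
and multiplies `F × F` by `(|b₁ b₂| / |a₁ a₂|)^{β-1} = 1`.
-/

open MeasureTheory
open scoped ENNReal

theorem MeasurableEquiv.map_withDensity {α β : Type*} [MeasurableSpace α] [MeasurableSpace β]
    (e : α ≃ᵐ β) (μ : Measure α) (g : α → ℝ≥0∞) :
    (μ.withDensity g).map e = (μ.map e).withDensity (g ∘ e.symm) := by
  ext s hs
  rw [e.map_apply, withDensity_apply _ (e.measurable hs), withDensity_apply _ hs, e.restrict_map,
    lintegral_map_equiv]
  simp

theorem ofReal_abs_mul_rpow (β c x : ℝ) :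
    ENNReal.ofReal (|c * x| ^ β) = ENNReal.ofReal (|c| ^ β) * ENNReal.ofReal (|x| ^ β) := by
  rw [abs_mul, Real.mul_rpow (abs_nonneg c) (abs_nonneg x), ENNReal.ofReal_mul (by positivity)]

theorem map_const_mul_withDensity_abs_rpow (β : ℝ) {c : ℝ} (hc : c ≠ 0) :
    (volume.withDensity fun x => ENNReal.ofReal (|x| ^ (-β))).map (c * ·)
      = ENNReal.ofReal (|c| ^ (β - 1)) •
        volume.withDensity (fun x => ENNReal.ofReal (|x| ^ (-β))) := by
  have hdensity : (fun y => ENNReal.ofReal (|c⁻¹ * y| ^ (-β)))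
      = ENNReal.ofReal (|c| ^ β) • fun y => ENNReal.ofReal (|y| ^ (-β)) := by
    ext y
    rw [ofReal_abs_mul_rpow, abs_inv, Real.inv_rpow (abs_nonneg c), Real.rpow_neg (abs_nonneg c),
      inv_inv]
    rfl
  have hscalar :
      ENNReal.ofReal |c⁻¹| * ENNReal.ofReal (|c| ^ β) = ENNReal.ofReal (|c| ^ (β - 1)) := by
    rw [← ENNReal.ofReal_mul (abs_nonneg _), abs_inv, Real.rpow_sub (abs_pos.2 hc), Real.rpow_one,
      inv_mul_eq_div]
  rw [← MeasurableEquiv.coe_mulLeft₀ hc, MeasurableEquiv.map_withDensity,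
    MeasurableEquiv.symm_mulLeft₀, MeasurableEquiv.coe_mulLeft₀, MeasurableEquiv.coe_mulLeft₀,
    Real.map_volume_mul_left hc, withDensity_smul_measure, Function.comp_def, hdensity,
    withDensity_smul _ (measurable_abs.pow_const _).ennreal_ofReal, smul_smul, hscalar]

theorem MeasureTheory.MeasurePreserving.prodMap_of_map_eq_smul {α β : Type*} [MeasurableSpace α]
    [MeasurableSpace β] {μ : Measure α} {ν : Measure β} [SFinite μ] [SFinite ν] {f : α → α}
    {g : β → β} {a b : ℝ≥0∞} (hf : Measurable f) (hg : Measurable g) (hμ : μ.map f = a • μ)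
    (hν : ν.map g = b • ν) (hab : a * b = 1) :
    MeasurePreserving (Prod.map f g) (μ.prod ν) (μ.prod ν) where
  measurable := hf.prodMap hg
  map_eq := by
    rw [← Measure.map_prod_map _ _ hf hg, hμ, hν, Measure.prod_smul_left, Measure.prod_smul_right,
      smul_smul, hab, one_smul]

theorem zero_stability_of_power_density_general {β : ℝ} :
    let F : Measure ℝ := volume.withDensity (fun x => ENNReal.ofReal (|x| ^ (-β)))
    ∀ a₁ a₂ b₁ b₂ : ℝ, a₁ * a₂ * b₁ * b₂ ≠ 0 → |a₁ * a₂| = |b₁ * b₂| →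
      ∃ L : ℝ × ℝ → ℝ × ℝ, MeasurePreserving L (F.prod F) (F.prod F) ∧
        ∀ p : ℝ × ℝ, b₁ * p.1 + b₂ * p.2 = a₁ * (L p).1 + a₂ * (L p).2 := by
  intro F a₁ a₂ b₁ b₂ hne habs
  obtain ⟨⟨⟨ha₁, ha₂⟩, hb₁⟩, hb₂⟩ := by simpa only [mul_ne_zero_iff] using hne
  have hdilation : |b₁ / a₁| * |b₂ / a₂| = 1 := by
    rw [← abs_mul, div_mul_div_comm, abs_div, habs, div_self (by positivity)]
  refine ⟨Prod.map (b₁ / a₁ * ·) (b₂ / a₂ * ·), ?_, fun p => ?_⟩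
  · refine MeasurePreserving.prodMap_of_map_eq_smul (measurable_const_mul _)
      (measurable_const_mul _) (map_const_mul_withDensity_abs_rpow β (div_ne_zero hb₁ ha₁))
      (map_const_mul_withDensity_abs_rpow β (div_ne_zero hb₂ ha₂)) ?_
    rw [← ENNReal.ofReal_mul (by positivity), ← Real.mul_rpow (abs_nonneg _) (abs_nonneg _),
      hdilation, Real.one_rpow, ENNReal.ofReal_one]
  · simp only [Prod.map_fst, Prod.map_snd, ← mul_assoc, mul_div_cancel₀ _ ha₁,
      mul_div_cancel₀ _ ha₂]

/-- For `β < 1`, the σ-finite measure on `ℝ` with density `|x|^{-β}` is zero-stable: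
for any two linear functionals `f₁(x) = a₁x₁ + a₂x₂`, `f₂(x) = b₁x₁ + b₂x₂` with
nonzero coefficients and equal quasi-norms `|a₁a₂| = |b₁b₂|`, there is a transformation
`L : ℝ² → ℝ²` preserving `F × F` with `f₂ = f₁ ∘ L`. In particular (β = 0) the Lebesgue
measure on `ℝ` is zero-stable. -/
theorem zero_stability_of_power_density {β : ℝ} (hβ : β < 1) :
    let F : Measure ℝ := volume.withDensity (fun x => ENNReal.ofReal (|x| ^ (-β)))
    ∀ a₁ a₂ b₁ b₂ : ℝ, a₁ * a₂ * b₁ * b₂ ≠ 0 → |a₁ * a₂| = |b₁ * b₂| →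
      ∃ L : ℝ × ℝ → ℝ × ℝ, MeasurePreserving L (F.prod F) (F.prod F) ∧
        ∀ p : ℝ × ℝ, b₁ * p.1 + b₂ * p.2 = a₁ * (L p).1 + a₂ * (L p).2 :=
  zero_stability_of_power_density_general
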